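/- arXiv:2505.17247 — 4 statements merged into one kernel-verified Lean document; each statement's English description precedes it below -/
import Mathlib

section
/- With the sequential pairing procedure using radius λ_t = t^{−1/(2+δ)d} (δ > 0), if all points x_1,…,x_T lie in [−log T, log T]^d, then the final reservoir size is at most C·(log T)^d · T^{1/(2+δ)} for a constant C depending only on d and δ; consequently the reservoir size is o(√(T/log T)) as T → ∞. -/
open Finset Filter

lemma packing_card (d : ℕ) (hd : 0 < d) (F : Finset ℕ) (y : ℕ → EuclideanSpace ℝ (Fin d))
    (Rad ε : ℝ) (hRad : 0 ≤ Rad) (hε : 0 < ε)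
    (hb : ∀ i ∈ F, ∀ j, |y i j| ≤ Rad)
    (hsep : ∀ i ∈ F, ∀ j ∈ F, i ≠ j → ε ≤ dist (y i) (y j)) :
    (F.card : ℝ) ≤ (2 * (Rad * (2 * Real.sqrt d) / ε) + 2) ^ d := by
  have hd' : (0:ℝ) < d := by exact_mod_cast hd
  have hsd : 0 < Real.sqrt d := Real.sqrt_pos.2 hd'
  set s : ℝ := ε / (2 * Real.sqrt d) with hs_def
  have hs : 0 < s := div_pos hε (by positivity)
  set g : ℕ → (Fin d → ℤ) := fun i j => ⌊y i j / s⌋ with hg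
  have hinj : Set.InjOn g F := by
    intro i hi i' hi' hgi
    by_contra hne
    have hdist : dist (y i) (y i') ≤ Real.sqrt d * s := by
      rw [EuclideanSpace.dist_eq]
      have hsum : ∑ j, dist (y i j) (y i' j) ^ 2 ≤ (d : ℝ) * s ^ 2 := by
        calc ∑ j, dist (y i j) (y i' j) ^ 2 ≤ ∑ _j : Fin d, s ^ 2 := by
              apply Finset.sum_le_sum
              intro j _
              have hfl : ⌊y i j / s⌋ = ⌊y i' j / s⌋ := congrFun hgi j
              have h1 : |y i j / s - y i' j / s| < 1 :=
                Int.abs_sub_lt_one_of_floor_eq_floor hfl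
              have h2 : |y i j - y i' j| < s := by
                rw [div_sub_div_same, abs_div, abs_of_pos hs, div_lt_one hs] at h1
                exact h1
              have h3 : dist (y i j) (y i' j) < s := by rw [Real.dist_eq]; exact h2
              have h4 : (0:ℝ) ≤ dist (y i j) (y i' j) := dist_nonneg
              nlinarith
          _ = (d : ℝ) * s ^ 2 := by simp [Finset.card_univ, mul_comm]
      calc Real.sqrt (∑ j, dist (y i j) (y i' j) ^ 2) ≤ Real.sqrt ((d:ℝ) * s ^ 2) :=
            Real.sqrt_le_sqrt hsum
        _ = Real.sqrt d * s := by
            rw [Real.sqrt_mul (le_of_lt hd'), Real.sqrt_sq hs.le]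
    have := hsep i hi i' hi' hne
    have hhalf : Real.sqrt d * s = ε / 2 := by
      rw [hs_def]; field_simp
    rw [hhalf] at hdist
    linarith
  set m : ℤ := ⌊Rad / s⌋ with hm_def
  have hm0 : (0:ℤ) ≤ m := Int.floor_nonneg.2 (by positivity)
  have himg : F.image g ⊆ Fintype.piFinset (fun _ : Fin d => Finset.Icc (-(m+1)) m) := by
    intro v hv
    rw [Finset.mem_image] at hv
    obtain ⟨i, hi, rfl⟩ := hv
    rw [Fintype.mem_piFinset]
    intro j
    rw [Finset.mem_Icc]
    have hab := abs_le.mp (hb i hi j)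
    constructor
    · apply Int.le_floor.2
      have h1 : -(Rad / s) ≤ y i j / s := by
        rw [← neg_div]
        gcongr
        exact hab.1
      have h2 : Rad / s < (m:ℝ) + 1 := Int.lt_floor_add_one _
      push_cast
      linarith
    · exact Int.floor_le_floor ((div_le_div_iff_of_pos_right hs).2 hab.2)
  have hcard : (F.card : ℝ) ≤ (2 * (m:ℝ) + 2) ^ d := by
    have h1 : F.card = (F.image g).card := (Finset.card_image_of_injOn hinj).symm
    have h2 : (F.image g).card ≤ (Fintype.piFinset (fun _ : Fin d => Finset.Icc (-(m+1)) m)).card :=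
      Finset.card_le_card himg
    have h3 : (Fintype.piFinset (fun _ : Fin d => Finset.Icc (-(m+1)) m)).card
        = (Finset.Icc (-(m+1)) m).card ^ d := by
      rw [Fintype.card_piFinset]
      simp
    have h4 : ((Finset.Icc (-(m+1)) m).card : ℝ) = 2 * (m:ℝ) + 2 := by
      rw [Int.card_Icc]
      have : (m + 1 - -(m+1)) = 2*m + 2 := by ring
      rw [this]
      have h5 : ((2*m+2).toNat : ℤ) = 2*m+2 := Int.toNat_of_nonneg (by omega)
      exact_mod_cast h5
    calc (F.card : ℝ) ≤ ((Finset.Icc (-(m+1)) m).card ^ d : ℕ) := by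
          rw [h1]; exact_mod_cast h3 ▸ h2
      _ = ((Finset.Icc (-(m+1)) m).card : ℝ) ^ d := by push_cast; ring
      _ = (2 * (m:ℝ) + 2) ^ d := by rw [h4]
  refine hcard.trans (pow_le_pow_left₀ (by positivity) ?_ d)
  have hms : (m:ℝ) ≤ Rad / s := Int.floor_le _
  have : Rad / s = Rad * (2 * Real.sqrt d) / ε := by
    rw [hs_def]; field_simp
  linarith

/-- For the sequential pairing procedure with radius
`λ_t = t^{−1/((2+δ)d)}` at step `t`, if all points `x_1,…,x_T` lie in `[−log T, log T]^d`,
then the final reservoir size is at most `C·(log T)^d·T^{1/(2+δ)}` for a constant `C`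
depending only on `d` and `δ`; consequently the reservoir size is `o(√(T/log T))` as
`T → ∞`. -/
theorem reservoir_size_bound (d : ℕ) (hd : 0 < d) (δ : ℝ) (hδ : 0 < δ) :
    ∃ C : ℝ, 0 < C ∧
      ((∀ (x : ℕ → EuclideanSpace ℝ (Fin d)) (R : ℕ → Finset ℕ) (T : ℕ), 2 ≤ T →
        R 0 = ∅ →
        (∀ t : ℕ,
          ((∀ s ∈ R t, ((t + 1 : ℕ) : ℝ) ^ (-(1 / ((2 + δ) * d))) ≤ dist (x (t + 1)) (x s)) ∧
              R (t + 1) = insert (t + 1) (R t))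
          ∨
          (∃ s ∈ R t, dist (x (t + 1)) (x s) < ((t + 1 : ℕ) : ℝ) ^ (-(1 / ((2 + δ) * d))) ∧
            (∀ s' ∈ R t, dist (x (t + 1)) (x s) ≤ dist (x (t + 1)) (x s')) ∧
            R (t + 1) = R t \ {s})) →
        (∀ t : ℕ, 1 ≤ t → t ≤ T → ∀ i, |x t i| ≤ Real.log T) →
        ((R T).card : ℝ) ≤ C * (Real.log T) ^ d * (T : ℝ) ^ ((1 : ℝ) / (2 + δ)))
      ∧
      Tendsto (fun T : ℕ =>
          (C * (Real.log T) ^ d * (T : ℝ) ^ ((1 : ℝ) / (2 + δ)))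
            / Real.sqrt ((T : ℝ) / Real.log T)) atTop (nhds 0)) := by
  have hd' : (0:ℝ) < d := by exact_mod_cast hd
  have h2δ : (0:ℝ) < 2 + δ := by linarith
  set α : ℝ := 1 / ((2 + δ) * d) with hα_def
  have hα : 0 < α := by positivity
  have hαd : α * d = 1 / (2 + δ) := by
    rw [hα_def]; field_simp
  set C : ℝ := (4 * Real.sqrt d + 3) ^ d with hC_def
  have hsd : 0 < Real.sqrt d := Real.sqrt_pos.2 hd'
  have hC : 0 < C := by positivity
  refine ⟨C, hC, ?_, ?_⟩
  · -- main bound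
    intro x R T hT hR0 hstep hbox
    have hmem : ∀ t, ∀ u ∈ R t, 1 ≤ u ∧ u ≤ t := by
      intro t
      induction t with
      | zero => intro u hu; rw [hR0] at hu; exact absurd hu (Finset.notMem_empty u)
      | succ n ih =>
        intro u hu
        rcases hstep n with ⟨_, heq⟩ | ⟨s', _, _, _, heq⟩
        · rw [heq, Finset.mem_insert] at hu
          rcases hu with rfl | hu
          · omega
          · have := ih u hu; omega
        · rw [heq] at hu
          have := ih u (Finset.mem_sdiff.mp hu).1; omega
    have hback : ∀ t u, u ∈ R (t+1) → u ≠ t+1 → u ∈ R t := by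
      intro t u hu hne
      rcases hstep t with ⟨_, heq⟩ | ⟨s', _, _, _, heq⟩
      · rw [heq, Finset.mem_insert] at hu; tauto
      · rw [heq] at hu; exact (Finset.mem_sdiff.mp hu).1
    have hpersist : ∀ k w u, u ≤ w → u ∈ R (w + k) → u ∈ R w := by
      intro k
      induction k with
      | zero => intro w u _ h; exact h
      | succ k ih =>
        intro w u huw hu
        exact ih w u huw (hback (w + k) u hu (by omega))
    have key : ∀ i ∈ R T, ∀ j ∈ R T, i < j →
        (T:ℝ) ^ (-α) ≤ dist (x j) (x i) := by
      intro i hi j hj hij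
      obtain ⟨hj1, hjT⟩ := hmem T j hj
      obtain ⟨hi1, _⟩ := hmem T i hi
      have hjR : j ∈ R j := by
        have := hpersist (T - j) j j le_rfl (by rwa [Nat.add_sub_cancel' hjT])
        exact this
      have hiR : i ∈ R (j - 1) := by
        have h1 : i ≤ j - 1 := by omega
        have h2 : j - 1 + (T - (j-1)) = T := by omega
        exact hpersist (T - (j-1)) (j-1) i h1 (by rwa [h2])
      have hj' : j - 1 + 1 = j := by omega
      rcases hstep (j - 1) with ⟨hfar, _⟩ | ⟨s', hs'mem, _, _, heq⟩
      · have hf := hfar i hiR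
        rw [hj'] at hf
        refine le_trans ?_ hf
        have : -(1 / ((2 + δ) * (d:ℝ))) = -α := by rw [hα_def]
        rw [this]
        apply Real.rpow_le_rpow_of_nonpos
        · exact_mod_cast Nat.pos_of_ne_zero (by omega)
        · exact_mod_cast hjT
        · linarith
      · exfalso
        rw [← hj', heq] at hjR
        have := hmem (j-1) (j-1+1) (Finset.mem_sdiff.mp hjR).1
        omega
    -- apply packing
    have hT1 : (1:ℝ) < T := by exact_mod_cast hT.trans_lt' one_lt_two
    have hT0 : (0:ℝ) < T := by linarith
    set L : ℝ := Real.log T with hL_def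
    have hL2 : Real.log 2 ≤ L := Real.log_le_log two_pos (by exact_mod_cast hT)
    have hlog2 : (0.6931471803 : ℝ) < Real.log 2 := Real.log_two_gt_d9
    have hL : 0 < L := by linarith
    set ε : ℝ := (T:ℝ) ^ (-α) with hε_def
    have hε : 0 < ε := Real.rpow_pos_of_pos hT0 _
    have hpack := packing_card d hd (R T) x L ε hL.le hε
      (fun i hi j => hbox i (hmem T i hi).1 (hmem T i hi).2 j)
      (fun i hi j hj hne => by
        rcases Nat.lt_or_ge i j with h | h
        · rw [dist_comm]; exact key i hi j hj h
        · exact key j hj i hi (by omega))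
    refine hpack.trans ?_
    set E : ℝ := (T:ℝ) ^ α with hE_def
    have hE0 : 0 < E := Real.rpow_pos_of_pos hT0 _
    have hE1 : (1:ℝ) ≤ E := by
      rw [hE_def]
      calc (1:ℝ) = (T:ℝ) ^ (0:ℝ) := (Real.rpow_zero _).symm
        _ ≤ (T:ℝ) ^ α := Real.rpow_le_rpow_of_exponent_le hT1.le hα.le
    have hεE : ε = E⁻¹ := by rw [hε_def, hE_def, Real.rpow_neg hT0.le]
    have hdivε : L * (2 * Real.sqrt d) / ε = L * (2 * Real.sqrt d) * E := by
      rw [hεE, div_eq_mul_inv, inv_inv]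
    rw [hdivε]
    have hEd : E ^ d = (T:ℝ) ^ ((1:ℝ) / (2 + δ)) := by
      rw [hE_def, ← Real.rpow_natCast ((T:ℝ) ^ α) d, ← Real.rpow_mul hT0.le, hαd]
    have hstep1 : 2 * (L * (2 * Real.sqrt d) * E) + 2 ≤ (4 * Real.sqrt d + 3) * (L * E) := by
      have h2le : 2 ≤ 3 * (L * E) := by nlinarith
      nlinarith
    calc (2 * (L * (2 * Real.sqrt d) * E) + 2) ^ d
        ≤ ((4 * Real.sqrt d + 3) * (L * E)) ^ d := by
          apply pow_le_pow_left₀ (by positivity) hstep1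
      _ = C * L ^ d * (T:ℝ) ^ ((1:ℝ) / (2 + δ)) := by
          rw [mul_pow, mul_pow, hEd, hC_def]; ring
  · -- tendsto 0
    have ha : (1:ℝ) / (2 + δ) < 1/2 := by
      rw [div_lt_div_iff₀ h2δ two_pos]; linarith
    have hc : 0 < 1/2 - (1:ℝ)/(2+δ) := by linarith
    have hlo := (isLittleO_log_rpow_rpow_atTop ((d:ℝ) + 1/2) hc).tendsto_div_nhds_zero
    have h1 : Tendsto (fun x : ℝ =>
        C * (Real.log x ^ ((d:ℝ) + 1/2) / x ^ (1/2 - (1:ℝ)/(2+δ)))) atTop (nhds 0) := by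
      simpa using hlo.const_mul C
    have heq : (fun x : ℝ => C * Real.log x ^ d * x ^ ((1:ℝ)/(2+δ)) / Real.sqrt (x / Real.log x))
        =ᶠ[atTop] (fun x : ℝ =>
        C * (Real.log x ^ ((d:ℝ) + 1/2) / x ^ (1/2 - (1:ℝ)/(2+δ)))) := by
      filter_upwards [eventually_ge_atTop 2] with x hx
      have hx1 : (1:ℝ) < x := by linarith
      have hx0 : (0:ℝ) < x := by linarith
      have hLx : 0 < Real.log x := Real.log_pos hx1
      have e1 : Real.log x ^ ((d:ℝ) + 1/2) = Real.log x ^ d * Real.log x ^ ((1:ℝ)/2) := by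
        rw [Real.rpow_add hLx, Real.rpow_natCast]
      have e2 : x ^ ((1:ℝ)/2 - (1:ℝ)/(2+δ)) = x ^ ((1:ℝ)/2) / x ^ ((1:ℝ)/(2+δ)) := by
        rw [← Real.rpow_sub hx0]
      have e3 : Real.sqrt (x / Real.log x) = x ^ ((1:ℝ)/2) / Real.log x ^ ((1:ℝ)/2) := by
        rw [Real.sqrt_eq_rpow, Real.div_rpow hx0.le hLx.le]
      have hpx : (0:ℝ) < x ^ ((1:ℝ)/2) := Real.rpow_pos_of_pos hx0 _
      have hpL : (0:ℝ) < Real.log x ^ ((1:ℝ)/2) := Real.rpow_pos_of_pos hLx _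
      have hpa : (0:ℝ) < x ^ ((1:ℝ)/(2+δ)) := Real.rpow_pos_of_pos hx0 _
      rw [e3, e1, e2]
      field_simp
    have hreal := h1.congr' heq.symm
    have := hreal.comp (tendsto_natCast_atTop_atTop (R := ℝ))
    exact this
end

section
/- Suppose a sequence of finite pair sets M_T satisfies (1/T) Σ_{(i,j)∈M_T} ‖X_i − X_j‖₂² → 0 in probability, the leftover (unmatched) index set R_T has |R_T| = o_p(√T), X_1, X_2, … are IID with E[‖X_1‖₂⁴] < ∞, and M_T* extends M_T by arbitrarily pairing the leftover indices. Then (1/T) Σ_{(i,j)∈M_T*} ‖X_i − X_j‖₂² → 0 in probability as well. -/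
open MeasureTheory ProbabilityTheory Filter Finset Topology

/-!
On the pairs of `M_T` the distance sum is `o_p(T)` by hypothesis. Every extra pair of `M_T*`
consists of leftover indices of `M_T`, and `‖a - b‖² ≤ 2‖a‖² + 2‖b‖²`, so by Cauchy–Schwarz the
extra pairs contribute at most `2 √(|R_T| · Σ_{i<T} ‖X_i‖⁴)`. The strong law of large numbers
bounds the fourth-moment sum by `C T` with high probability, so this is `O_p(T^{3/4}) = o_p(T)`.
-/

section Pairings

variable {E : Type*} [SeminormedAddGroup E] (x : ℕ → E)

lemma sum_norm_sub_sq_le_two_mul_sum_biUnion {D : Finset (ℕ × ℕ)} (hne : ∀ p ∈ D, p.1 ≠ p.2)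
    (hD : (D : Set (ℕ × ℕ)).PairwiseDisjoint fun p => ({p.1, p.2} : Finset ℕ)) :
    ∑ p ∈ D, ‖x p.1 - x p.2‖ ^ 2 ≤ 2 * ∑ i ∈ D.biUnion (fun p => {p.1, p.2}), ‖x i‖ ^ 2 := by
  rw [sum_biUnion hD, mul_sum]
  refine sum_le_sum fun p hp => ?_
  rw [sum_pair (hne p hp)]
  exact (pow_le_pow_left₀ (norm_nonneg _) (norm_sub_le _ _) 2).trans add_sq_le

variable {P Q : Finset (ℕ × ℕ)} {T : ℕ}

lemma biUnion_sdiff_subset_range_sdiff_biUnion (hrange : ∀ p ∈ Q, p.1 < T ∧ p.2 < T ∧ p.1 ≠ p.2)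
    (hQ : (Q : Set (ℕ × ℕ)).PairwiseDisjoint fun p => ({p.1, p.2} : Finset ℕ)) (hPQ : P ⊆ Q) :
    (Q \ P).biUnion (fun p => {p.1, p.2}) ⊆ range T \ P.biUnion (fun p => {p.1, p.2}) := by
  intro i hi
  obtain ⟨p, hp, hip⟩ := mem_biUnion.mp hi
  obtain ⟨hpQ, hpP⟩ := mem_sdiff.mp hp
  refine mem_sdiff.mpr ⟨mem_range.mpr ?_, fun hiP => ?_⟩
  · rcases mem_insert.mp hip with rfl | hi2
    · exact (hrange p hpQ).1
    · exact mem_singleton.mp hi2 ▸ (hrange p hpQ).2.1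
  · obtain ⟨q, hq, hiq⟩ := mem_biUnion.mp hiP
    have hpq : p ≠ q := by rintro rfl; exact hpP hq
    exact disjoint_left.mp (hQ hpQ (hPQ hq) hpq) hip hiq

lemma sq_sum_sdiff_norm_sub_sq_le (hrange : ∀ p ∈ Q, p.1 < T ∧ p.2 < T ∧ p.1 ≠ p.2)
    (hQ : (Q : Set (ℕ × ℕ)).PairwiseDisjoint fun p => ({p.1, p.2} : Finset ℕ)) (hPQ : P ⊆ Q) :
    (∑ p ∈ Q \ P, ‖x p.1 - x p.2‖ ^ 2) ^ 2 ≤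
      4 * #(range T \ P.biUnion fun p => {p.1, p.2}) * ∑ i ∈ range T, ‖x i‖ ^ 4 := by
  set R := range T \ P.biUnion fun p => {p.1, p.2}
  have hextra : ∑ p ∈ Q \ P, ‖x p.1 - x p.2‖ ^ 2 ≤ 2 * ∑ i ∈ R, ‖x i‖ ^ 2 :=
    (sum_norm_sub_sq_le_two_mul_sum_biUnion x (fun p hp => (hrange p (sdiff_subset hp)).2.2)
      (hQ.subset (by simp))).trans <| mul_le_mul_of_nonneg_left
        (sum_le_sum_of_subset_of_nonneg (biUnion_sdiff_subset_range_sdiff_biUnion hrange hQ hPQ)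
          fun _ _ _ => by positivity) zero_le_two
  calc (∑ p ∈ Q \ P, ‖x p.1 - x p.2‖ ^ 2) ^ 2
      ≤ (2 * ∑ i ∈ R, ‖x i‖ ^ 2) ^ 2 := pow_le_pow_left₀ (by positivity) hextra 2
    _ = 4 * (∑ i ∈ R, ‖x i‖ ^ 2) ^ 2 := by ring
    _ ≤ 4 * (#R * ∑ i ∈ R, (‖x i‖ ^ 2) ^ 2) := by gcongr; exact sq_sum_le_card_mul_sum_sq
    _ ≤ 4 * #R * ∑ i ∈ range T, ‖x i‖ ^ 4 := by
      rw [← mul_assoc]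
      gcongr
      simp_rw [← pow_mul]
      exact sum_le_sum_of_subset_of_nonneg sdiff_subset fun _ _ _ => by positivity

lemma one_div_mul_sum_norm_sub_sq_le {ε C : ℝ} (hε : 0 ≤ ε) (hT : 0 < T)
    (hrange : ∀ p ∈ Q, p.1 < T ∧ p.2 < T ∧ p.1 ≠ p.2)
    (hQ : (Q : Set (ℕ × ℕ)).PairwiseDisjoint fun p => ({p.1, p.2} : Finset ℕ)) (hPQ : P ⊆ Q)
    (hthreshold : 16 * C ≤ ε ^ 2 * √T)
    (hP : 1 / (T : ℝ) * ∑ p ∈ P, ‖x p.1 - x p.2‖ ^ 2 ≤ ε / 2)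
    (hR : (#(range T \ P.biUnion fun p => {p.1, p.2}) : ℝ) ≤ √T)
    (hmoment : ∑ i ∈ range T, ‖x i‖ ^ 4 ≤ C * T) :
    1 / (T : ℝ) * ∑ p ∈ Q, ‖x p.1 - x p.2‖ ^ 2 ≤ ε := by
  have hT' : (0 : ℝ) < T := Nat.cast_pos.mpr hT
  rw [one_div_mul_eq_div, div_le_iff₀ hT'] at hP ⊢
  have hsqrt : √(T : ℝ) ^ 2 = T := Real.sq_sqrt hT'.le
  have hextra_sq : (∑ p ∈ Q \ P, ‖x p.1 - x p.2‖ ^ 2) ^ 2 ≤ (ε / 2 * T) ^ 2 :=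
    calc (∑ p ∈ Q \ P, ‖x p.1 - x p.2‖ ^ 2) ^ 2
        ≤ 4 * #(range T \ P.biUnion fun p => {p.1, p.2}) * ∑ i ∈ range T, ‖x i‖ ^ 4 :=
          sq_sum_sdiff_norm_sub_sq_le x hrange hQ hPQ
      _ ≤ 4 * √T * (C * T) := by gcongr
      _ = 16 * C * (√T * T) / 4 := by ring
      _ ≤ ε ^ 2 * √T * (√T * T) / 4 := by gcongr
      _ = (ε / 2 * T) ^ 2 := by linear_combination (ε ^ 2 * T / 4) * hsqrt
  have hextra : ∑ p ∈ Q \ P, ‖x p.1 - x p.2‖ ^ 2 ≤ ε / 2 * T :=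
    (pow_le_pow_iff_left₀ (by positivity) (by positivity) two_ne_zero).mp hextra_sq
  rw [← sum_sdiff hPQ]
  linarith

end Pairings

lemma tendsto_measure_mul_lt_sum_of_iid {Ω : Type*} {mΩ : MeasurableSpace Ω} {μ : Measure Ω}
    [IsFiniteMeasure μ] (Y : ℕ → Ω → ℝ) (hint : Integrable (Y 0) μ)
    (hindep : Pairwise fun i j => Y i ⟂ᵢ[μ] Y j) (hident : ∀ i, IdentDistrib (Y i) (Y 0) μ μ)
    {C : ℝ} (hC : μ[Y 0] < C) :
    Tendsto (fun T : ℕ => μ {ω | C * T < ∑ i ∈ range T, Y i ω}) atTop (𝓝 0) := by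
  have hmeas (T : ℕ) : AEStronglyMeasurable (fun ω => (T : ℝ)⁻¹ • ∑ i ∈ range T, Y i ω) μ :=
    (Finset.aestronglyMeasurable_fun_sum _
      fun i _ => (hident i).aemeasurable_fst.aestronglyMeasurable).const_smul ((T : ℝ)⁻¹)
  have hlln := tendstoInMeasure_of_tendsto_ae hmeas (strong_law_ae Y hint hindep hident)
  refine tendsto_of_tendsto_of_tendsto_of_le_of_le' tendsto_const_nhds
    (hlln _ (ENNReal.ofReal_pos.mpr (sub_pos.mpr hC))) (Eventually.of_forall fun _ => zero_le) ?_
  filter_upwards [eventually_gt_atTop 0] with T hT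
  refine measure_mono fun ω (hω : C * T < _) => ?_
  have hmean : C < (T : ℝ)⁻¹ • ∑ i ∈ range T, Y i ω := by
    rw [smul_eq_mul, ← div_eq_inv_mul]
    exact (lt_div_iff₀ (Nat.cast_pos.mpr hT)).mpr hω
  show _ ≤ edist _ _
  rw [edist_dist, Real.dist_eq]
  exact ENNReal.ofReal_le_ofReal <| (sub_le_sub_right hmean.le _).trans (le_abs_self _)

lemma tendsto_measure_of_eventually_subset_union {α ι : Type*} {mα : MeasurableSpace α}
    {μ : Measure α} {l : Filter ι} {s a b c : ι → Set α}
    (ha : Tendsto (fun i => μ (a i)) l (𝓝 0)) (hb : Tendsto (fun i => μ (b i)) l (𝓝 0))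
    (hc : Tendsto (fun i => μ (c i)) l (𝓝 0)) (hs : ∀ᶠ i in l, s i ⊆ a i ∪ b i ∪ c i) :
    Tendsto (fun i => μ (s i)) l (𝓝 0) := by
  have habc := (ha.add hb).add hc
  rw [add_zero, add_zero] at habc
  refine tendsto_of_tendsto_of_tendsto_of_le_of_le' tendsto_const_nhds habc
    (Eventually.of_forall fun _ => zero_le) ?_
  filter_upwards [hs] with i hi
  exact (measure_mono hi).trans <|
    (measure_union_le _ _).trans (add_le_add_left (measure_union_le _ _) _)

theorem augmented_pairing_distance_condition_general
    {Ω : Type*} [MeasureSpace Ω] [IsProbabilityMeasure (ℙ : Measure Ω)]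
    {d : ℕ} (X : ℕ → Ω → EuclideanSpace ℝ (Fin d))
    (M Mstar : ℕ → Ω → Finset (ℕ × ℕ))
    (hindep : iIndepFun X ℙ)
    (hident : ∀ i, IdentDistrib (X i) (X 0) ℙ ℙ)
    (hmom : Integrable (fun ω => ‖X 0 ω‖ ^ 4) ℙ)
    -- pairs consist of distinct indices in {0,…,T−1}, pairwise disjoint
    (hrange : ∀ T ω, ∀ p ∈ Mstar T ω, p.1 < T ∧ p.2 < T ∧ p.1 ≠ p.2)
    (hdisj : ∀ T ω, ∀ p ∈ Mstar T ω, ∀ q ∈ Mstar T ω, p ≠ q →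
      ({p.1, p.2} : Finset ℕ) ∩ ({q.1, q.2} : Finset ℕ) = ∅)
    -- `Mstar` extends `M` and leaves at most one index unmatched
    (hsub : ∀ T ω, M T ω ⊆ Mstar T ω)
    -- intra-pair distance condition for `M`
    (hconv : ∀ ε > (0 : ℝ), Tendsto (fun T : ℕ =>
      (ℙ : Measure Ω) {ω | ε < (1 / (T : ℝ)) *
        ∑ p ∈ M T ω, ‖X p.1 ω - X p.2 ω‖ ^ 2}) atTop (nhds 0))
    -- the unmatched set of `M` has size `o_p(√T)`
    (hres : ∀ ε > (0 : ℝ), Tendsto (fun T : ℕ =>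
      (ℙ : Measure Ω) {ω | ε * Real.sqrt T <
        (((Finset.range T) \ (M T ω).biUnion (fun p => {p.1, p.2})).card : ℝ)})
      atTop (nhds 0)) :
    ∀ ε > (0 : ℝ), Tendsto (fun T : ℕ =>
      (ℙ : Measure Ω) {ω | ε < (1 / (T : ℝ)) *
        ∑ p ∈ Mstar T ω, ‖X p.1 ω - X p.2 ω‖ ^ 2}) atTop (nhds 0) := by
  intro ε hε
  obtain ⟨C, hC⟩ : ∃ C, ∫ ω, ‖X 0 ω‖ ^ 4 < C := ⟨_, lt_add_one _⟩
  have hnorm4 : Measurable fun x : EuclideanSpace ℝ (Fin d) => ‖x‖ ^ 4 := by fun_prop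
  have hmoment := tendsto_measure_mul_lt_sum_of_iid (fun i ω => ‖X i ω‖ ^ 4) hmom
    (fun i j hij => (hindep.indepFun hij).comp hnorm4 hnorm4)
    (fun i => (hident i).comp hnorm4) hC
  have hthreshold : ∀ᶠ T : ℕ in atTop, 16 * C ≤ ε ^ 2 * √T :=
    ((Real.tendsto_sqrt_atTop.comp tendsto_natCast_atTop_atTop).const_mul_atTop
      (by positivity)).eventually_ge_atTop _
  refine tendsto_measure_of_eventually_subset_union (hconv (ε / 2) (half_pos hε)) (hres 1 one_pos)
    hmoment ?_
  filter_upwards [hthreshold, eventually_gt_atTop 0] with T hT hT0 ω hω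
  by_contra hgood
  simp only [Set.mem_union, Set.mem_ofPred_eq, not_or, not_lt, one_mul] at hgood hω
  obtain ⟨⟨hP, hR⟩, hY⟩ := hgood
  exact hω.not_ge <| one_div_mul_sum_norm_sub_sq_le (X · ω) hε.le hT0 (hrange T ω)
    (fun p hp q hq hpq => disjoint_iff_inter_eq_empty.mpr (hdisj T ω p hp q hq hpq))
    (hsub T ω) hT hP hR hY

/-- If the matched pairs `M_T` satisfy
`(1/T) Σ_{(i,j)∈M_T} ‖X_i−X_j‖² → 0` in probability, the unmatched index set has cardinality
`o_p(√T)`, the `X_i` are IID with `E[‖X_1‖⁴] < ∞`, and `M_T*` extends `M_T` by arbitrarily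
pairing the leftover indices (leaving at most one unmatched), then
`(1/T) Σ_{(i,j)∈M_T*} ‖X_i−X_j‖² → 0` in probability as well. -/
theorem augmented_pairing_distance_condition
    {Ω : Type*} [MeasureSpace Ω] [IsProbabilityMeasure (ℙ : Measure Ω)]
    {d : ℕ} (X : ℕ → Ω → EuclideanSpace ℝ (Fin d))
    (M Mstar : ℕ → Ω → Finset (ℕ × ℕ))
    (hmeas : ∀ i, Measurable (X i))
    (hindep : iIndepFun X ℙ)
    (hident : ∀ i, IdentDistrib (X i) (X 0) ℙ ℙ)
    (hmom : Integrable (fun ω => ‖X 0 ω‖ ^ 4) ℙ)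
    -- pairs consist of distinct indices in {0,…,T−1}, pairwise disjoint
    (hrange : ∀ T ω, ∀ p ∈ Mstar T ω, p.1 < T ∧ p.2 < T ∧ p.1 ≠ p.2)
    (hdisj : ∀ T ω, ∀ p ∈ Mstar T ω, ∀ q ∈ Mstar T ω, p ≠ q →
      ({p.1, p.2} : Finset ℕ) ∩ ({q.1, q.2} : Finset ℕ) = ∅)
    -- `Mstar` extends `M` and leaves at most one index unmatched
    (hsub : ∀ T ω, M T ω ⊆ Mstar T ω)
    (hleft : ∀ T ω,
      ((Finset.range T) \ (Mstar T ω).biUnion (fun p => {p.1, p.2})).card ≤ 1)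
    -- intra-pair distance condition for `M`
    (hconv : ∀ ε > (0 : ℝ), Tendsto (fun T : ℕ =>
      (ℙ : Measure Ω) {ω | ε < (1 / (T : ℝ)) *
        ∑ p ∈ M T ω, ‖X p.1 ω - X p.2 ω‖ ^ 2}) atTop (nhds 0))
    -- the unmatched set of `M` has size `o_p(√T)`
    (hres : ∀ ε > (0 : ℝ), Tendsto (fun T : ℕ =>
      (ℙ : Measure Ω) {ω | ε * Real.sqrt T <
        (((Finset.range T) \ (M T ω).biUnion (fun p => {p.1, p.2})).card : ℝ)})
      atTop (nhds 0)) :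
    ∀ ε > (0 : ℝ), Tendsto (fun T : ℕ =>
      (ℙ : Measure Ω) {ω | ε < (1 / (T : ℝ)) *
        ∑ p ∈ Mstar T ω, ‖X p.1 ω - X p.2 ω‖ ^ 2}) atTop (nhds 0) :=
  augmented_pairing_distance_condition_general X M Mstar hindep hident hmom hrange hdisj hsub hconv
    hres
end

section
/- In the reservoir-design variance formula, the variance-reduction term satisfies: if g is L-Lipschitz, then for any matched pair (i,j), g(X_i)g(X_j) ≥ g(X_i)² − L·|g(X_i)|·‖X_i − X_j‖₂; hence 2g(X_i)g(X_j) ≥ g(X_i)² + g(X_j)² − L²‖X_i − X_j‖₂², so the conditional variance of the IPW estimator under the reservoir design is at most (1/T²)Σ_{i∈R_T}(2σ₁²(X_i)+2σ₀²(X_i)+g(X_i)²) + (1/T²)Σ_{(i,j)∈M_T}[2σ₁²(X_i)+2σ₀²(X_i)+2σ₁²(X_j)+2σ₀²(X_j) + L²‖X_i−X_j‖₂²]. -/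
open Finset

/-- In the reservoir-design variance formula, if `g` is `L`-Lipschitz then
for each matched pair `(i,j)`: `g(X_i)g(X_j) ≥ g(X_i)² − L·|g(X_i)|·‖X_i−X_j‖`, hence
`2g(X_i)g(X_j) ≥ g(X_i)²+g(X_j)² − L²‖X_i−X_j‖²`, and therefore the conditional variance of
the IPW estimator is at most
`(1/T²)Σ_{i∈R}(2σ₁²+2σ₀²+g²) + (1/T²)Σ_{(i,j)∈M}[2σ₁²(X_i)+2σ₀²(X_i)+2σ₁²(X_j)+2σ₀²(X_j)
 + L²‖X_i−X_j‖²]`. -/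
theorem variance_upper_bound_lipschitz
    {d : ℕ} (T : ℕ) (hT : 0 < T)
    (X : ℕ → EuclideanSpace ℝ (Fin d)) (M : Finset (ℕ × ℕ))
    (s1 s0 : EuclideanSpace ℝ (Fin d) → ℝ) (g : EuclideanSpace ℝ (Fin d) → ℝ)
    (L : NNReal) (hLip : LipschitzWith L g)
    (hs1 : ∀ x, 0 ≤ s1 x) (hs0 : ∀ x, 0 ≤ s0 x)
    (hMrange : ∀ p ∈ M, p.1 < T ∧ p.2 < T ∧ p.1 ≠ p.2)
    (hMdisj : ∀ p ∈ M, ∀ q ∈ M, p ≠ q →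
      ({p.1, p.2} : Finset ℕ) ∩ ({q.1, q.2} : Finset ℕ) = ∅)
    (V : ℝ)
    -- the reservoir-design variance formula (Proposition 1)
    (hV : V = (1 / (T : ℝ) ^ 2) * ∑ i ∈ Finset.range T,
          (2 * s1 (X i) + 2 * s0 (X i) + g (X i) ^ 2)
        - (2 / (T : ℝ) ^ 2) * ∑ p ∈ M, g (X p.1) * g (X p.2)) :
    (∀ p ∈ M, g (X p.1) * g (X p.2)
        ≥ g (X p.1) ^ 2 - (L : ℝ) * |g (X p.1)| * ‖X p.1 - X p.2‖)
    ∧ (∀ p ∈ M, 2 * (g (X p.1) * g (X p.2))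
        ≥ g (X p.1) ^ 2 + g (X p.2) ^ 2 - (L : ℝ) ^ 2 * ‖X p.1 - X p.2‖ ^ 2)
    ∧ V ≤ (1 / (T : ℝ) ^ 2) *
        ∑ i ∈ Finset.range T \ M.biUnion (fun p => {p.1, p.2}),
          (2 * s1 (X i) + 2 * s0 (X i) + g (X i) ^ 2)
      + (1 / (T : ℝ) ^ 2) * ∑ p ∈ M,
          (2 * s1 (X p.1) + 2 * s0 (X p.1) + 2 * s1 (X p.2) + 2 * s0 (X p.2)
            + (L : ℝ) ^ 2 * ‖X p.1 - X p.2‖ ^ 2) := by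

  have habs : ∀ p ∈ M, |g (X p.1) - g (X p.2)| ≤ (L : ℝ) * ‖X p.1 - X p.2‖ := by
    intro p hp
    have h := hLip.dist_le_mul (X p.1) (X p.2)
    rwa [Real.dist_eq, dist_eq_norm] at h
  have part1 : ∀ p ∈ M, g (X p.1) * g (X p.2)
      ≥ g (X p.1) ^ 2 - (L : ℝ) * |g (X p.1)| * ‖X p.1 - X p.2‖ := by
    intro p hp
    have h := habs p hp
    have h2 : |g (X p.1) * (g (X p.2) - g (X p.1))| ≤ |g (X p.1)| * ((L : ℝ) * ‖X p.1 - X p.2‖) := by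
      rw [abs_mul]
      exact mul_le_mul_of_nonneg_left (by simpa [abs_sub_comm] using h) (abs_nonneg _)
    nlinarith [neg_abs_le (g (X p.1) * (g (X p.2) - g (X p.1)))]
  have part2 : ∀ p ∈ M, 2 * (g (X p.1) * g (X p.2))
      ≥ g (X p.1) ^ 2 + g (X p.2) ^ 2 - (L : ℝ) ^ 2 * ‖X p.1 - X p.2‖ ^ 2 := by
    intro p hp
    have h := habs p hp
    nlinarith [abs_nonneg (g (X p.1) - g (X p.2)), sq_abs (g (X p.1) - g (X p.2)),
      norm_nonneg (X p.1 - X p.2)]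
  refine ⟨part1, part2, ?_⟩
  set f : ℕ → ℝ := fun i => 2 * s1 (X i) + 2 * s0 (X i) + g (X i) ^ 2 with hf
  set S := M.biUnion (fun p => ({p.1, p.2} : Finset ℕ)) with hS
  have hSsub : S ⊆ Finset.range T := by
    intro i hi
    simp only [hS, Finset.mem_biUnion, Finset.mem_insert, Finset.mem_singleton] at hi
    obtain ⟨p, hp, hi⟩ := hi
    rcases hi with rfl | rfl
    · exact Finset.mem_range.mpr (hMrange p hp).1
    · exact Finset.mem_range.mpr (hMrange p hp).2.1
  have hdisj : (M : Set (ℕ × ℕ)).PairwiseDisjoint (fun p => ({p.1, p.2} : Finset ℕ)) := by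
    intro p hp q hq hpq
    simp only [Function.onFun, Finset.disjoint_iff_inter_eq_empty]
    exact hMdisj p hp q hq hpq
  have hsumS : ∑ i ∈ S, f i = ∑ p ∈ M, (f p.1 + f p.2) := by
    rw [hS, Finset.sum_biUnion hdisj]
    refine Finset.sum_congr rfl fun p hp => ?_
    exact Finset.sum_pair (hMrange p hp).2.2
  have hsplit : ∑ i ∈ Finset.range T, f i
      = ∑ i ∈ Finset.range T \ S, f i + ∑ p ∈ M, (f p.1 + f p.2) := by
    rw [← hsumS, Finset.sum_sdiff hSsub]
  have hT2 : (0:ℝ) ≤ 1 / (T : ℝ) ^ 2 := by positivity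
  have hkey : ∑ p ∈ M, (f p.1 + f p.2) - 2 * ∑ p ∈ M, g (X p.1) * g (X p.2)
      ≤ ∑ p ∈ M, (2 * s1 (X p.1) + 2 * s0 (X p.1) + 2 * s1 (X p.2) + 2 * s0 (X p.2)
            + (L : ℝ) ^ 2 * ‖X p.1 - X p.2‖ ^ 2) := by
    rw [Finset.mul_sum, ← Finset.sum_sub_distrib]
    refine Finset.sum_le_sum fun p hp => ?_
    have := part2 p hp
    simp only [hf]
    nlinarith
  calc V = (1 / (T : ℝ) ^ 2) * (∑ i ∈ Finset.range T \ S, f i + ∑ p ∈ M, (f p.1 + f p.2))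
        - (2 / (T : ℝ) ^ 2) * ∑ p ∈ M, g (X p.1) * g (X p.2) := by rw [hV, hsplit]
    _ = (1 / (T : ℝ) ^ 2) * ∑ i ∈ Finset.range T \ S, f i
        + (1 / (T : ℝ) ^ 2) * (∑ p ∈ M, (f p.1 + f p.2) - 2 * ∑ p ∈ M, g (X p.1) * g (X p.2)) := by
        ring
    _ ≤ _ := by gcongr
end

section
/- Suppose points arrive sequentially with nonincreasing pairing radii λ_t, and two points with indices t₁ < t₂ both remain unpaired in the final reservoir at time T. Then ‖X_{t₁} − X_{t₂}‖₂ ≥ λ_{t₂} ≥ λ_T. Hence the unknown-horizon procedure (radius λ_t at step t) yields a final reservoir that is a λ_T-packing, the same packing guarantee as the known-horizon procedure with fixed radius λ_T. -/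
open Finset

/-- For sequential pairing with nonincreasing radii `lam t`, if indices
`t₁ < t₂` both remain in the final reservoir at time `T`, then
`‖X_{t₁} − X_{t₂}‖ ≥ λ_{t₂} ≥ λ_T`; hence the unknown-horizon procedure yields a final
reservoir that is a `λ_T`-packing, matching the known-horizon guarantee. -/
theorem unknown_horizon_packing {d : ℕ}
    (x : ℕ → EuclideanSpace ℝ (Fin d)) (lam : ℕ → ℝ) (R : ℕ → Finset ℕ)
    (hpos : ∀ t, 0 < lam t) (hanti : Antitone lam)
    (hR0 : R 0 = ∅)
    (hstep : ∀ t,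
      ((∀ s ∈ R t, lam t ≤ dist (x t) (x s)) ∧ R (t + 1) = insert t (R t))
      ∨
      (∃ s ∈ R t, dist (x t) (x s) < lam t ∧
        (∀ s' ∈ R t, dist (x t) (x s) ≤ dist (x t) (x s')) ∧
        R (t + 1) = R t \ {s})) :
    ∀ T : ℕ, ∀ t₁ ∈ R T, ∀ t₂ ∈ R T, t₁ < t₂ →
      lam t₂ ≤ dist (x t₁) (x t₂) ∧ lam T ≤ dist (x t₁) (x t₂) := by
  -- every member of R t is < t
  have hlt : ∀ t, ∀ s ∈ R t, s < t := by
    intro t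
    induction t with
    | zero => simp [hR0]
    | succ n ih =>
      intro s hs
      rcases hstep n with ⟨_, heq⟩ | ⟨a, ha, _, _, heq⟩
      · rw [heq] at hs
        rcases Finset.mem_insert.mp hs with h | h
        · omega
        · exact Nat.lt_succ_of_lt (ih s h)
      · rw [heq] at hs
        exact Nat.lt_succ_of_lt (ih s (Finset.mem_sdiff.mp hs).1)
  -- persistence backwards: membership at later time implies membership at earlier time > index
  have hpers : ∀ a t t', t ≤ t' → a < t → a ∈ R t' → a ∈ R t := by
    intro a t t' hle hat
    induction t' , hle using Nat.le_induction with
    | base => exact id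
    | succ n hn ih =>
      intro h
      apply ih
      rcases hstep n with ⟨_, heq⟩ | ⟨s, hs, _, _, heq⟩
      · rw [heq] at h
        rcases Finset.mem_insert.mp h with h | h
        · omega
        · exact h
      · rw [heq] at h
        exact (Finset.mem_sdiff.mp h).1
  intro T t₁ h1 t₂ h2 hlt12
  have ht2T : t₂ < T := hlt T t₂ h2
  have h1t2 : t₁ ∈ R t₂ := hpers t₁ t₂ T (le_of_lt ht2T) hlt12 h1
  have h2succ : t₂ ∈ R (t₂ + 1) := hpers t₂ (t₂ + 1) T ht2T (Nat.lt_succ_self _) h2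
  rcases hstep t₂ with ⟨hfar, heq⟩ | ⟨s, hs, _, _, heq⟩
  · have := hfar t₁ h1t2
    rw [dist_comm] at this
    exact ⟨this, le_trans (hanti (le_of_lt ht2T)) this⟩
  · exfalso
    rw [heq] at h2succ
    exact absurd (hlt t₂ t₂ (Finset.mem_sdiff.mp h2succ).1) (lt_irrefl t₂)
end
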